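/- arXiv:2212.13215 — 6 statements merged into one kernel-verified Lean document; each statement's English description precedes it below -/
import Mathlib

section
/- Let S ⊆ ℂ^N be a Zariski-locally-closed irreducible subset that is smooth, and let (f,g) be an algebraic family of pairs of rational maps of degree d ≥ 2 over S, all defined over ℂ. Suppose there is a generic sequence of points s_n ∈ S (no subsequence of which is contained in a proper Zariski-closed subset of S) such that the cardinality of Preper(f_{s_n}) ∩ Preper(g_{s_n}) is either infinite for each n or tends to infinity with n. Then for every integer m ≥ 1, the set {(s, x_1, …, x_m) ∈ S × (ℙ¹(ℂ))^m : x_i ∈ Preper(f_s) ∩ Preper(g_s) for each i} is Zariski dense in S × (ℙ¹(ℂ))^m. -/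
noncomputable section

open MvPolynomial

abbrev P1 : Type := Projectivization ℂ (Fin 2 → ℂ)

lemma vec_ne {p q : ℂ} (h : p ≠ 0 ∨ q ≠ 0) : ![p, q] ≠ 0 := by
  intro hz
  rcases h with h | h
  · exact h (by simpa using congrFun hz 0)
  · exact h (by simpa using congrFun hz 1)

/-- Evaluation at `v ∈ ℂ²` of the homogeneous degree-`d` form `∑ⱼ aⱼ Xʲ Y^(d-j)`
whose coefficient tuple is `a`. -/
def homEval {d : ℕ} (a : Fin (d + 1) → ℂ) (v : Fin 2 → ℂ) : ℂ :=
  ∑ j : Fin (d + 1), a j * v 0 ^ (j : ℕ) * v 1 ^ (d - (j : ℕ))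

/-- The pair of degree-`d` forms with coefficient tuples `a`, `b` has no common zero
in `ℂ² \ {0}`. -/
def GoodPair {d : ℕ} (a b : Fin (d + 1) → ℂ) : Prop :=
  ∀ v : Fin 2 → ℂ, v ≠ 0 → homEval a v ≠ 0 ∨ homEval b v ≠ 0

open Classical in
/-- The self-map of `ℙ¹(ℂ)` induced by the pair of degree-`d` forms with coefficient
tuples `a`, `b` (defined arbitrarily where both forms vanish, which does not happen
for a `GoodPair`). -/
def ratFun {d : ℕ} (a b : Fin (d + 1) → ℂ) (x : P1) : P1 :=
  if h : homEval a x.rep ≠ 0 ∨ homEval b x.rep ≠ 0 then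
    Projectivization.mk ℂ ![homEval a x.rep, homEval b x.rep] (vec_ne h)
  else x

/-- A rational map of degree `d` on `ℙ¹(ℂ)`: a pair of homogeneous degree-`d` forms
(recorded through their coefficient tuples) with no common zero in `ℂ² \ {0}`. -/
structure RatMap (d : ℕ) where
  a : Fin (d + 1) → ℂ
  b : Fin (d + 1) → ℂ
  good : GoodPair a b

/-- The self-map of `ℙ¹(ℂ)` induced by a rational map. -/
def RatMap.toFun {d : ℕ} (f : RatMap d) : P1 → P1 := ratFun f.a f.b

/-- The set of preperiodic points of a rational map of degree `d` on `ℙ¹(ℂ)`. -/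
def Preper {d : ℕ} (f : RatMap d) : Set P1 :=
  {x | ∃ n m : ℕ, m < n ∧ f.toFun^[n] x = f.toFun^[m] x}

/-- The point `[z : 1]` of `ℙ¹(ℂ)`. -/
def toP1 (z : ℂ) : P1 := Projectivization.mk ℂ ![z, 1] (vec_ne (Or.inr one_ne_zero))

/-- The point `∞ = [1 : 0]` of `ℙ¹(ℂ)`. -/
def infty : P1 := Projectivization.mk ℂ ![1, 0] (vec_ne (Or.inl one_ne_zero))

/-- The Möbius transformation of `ℙ¹(ℂ)` induced by an invertible linear map of `ℂ²`. -/
def mobius (M : (Fin 2 → ℂ) ≃ₗ[ℂ] (Fin 2 → ℂ)) (x : P1) : P1 :=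
  Projectivization.mk ℂ (M x.rep) (by
    simpa using (LinearEquiv.map_ne_zero_iff M).mpr x.rep_nonzero)
/-- A Zariski-closed subset of `ℂ^N`: the common zero locus of finitely many
polynomials. -/
def ZarClosedAff {N : ℕ} (Z : Set (Fin N → ℂ)) : Prop :=
  ∃ I : Finset (MvPolynomial (Fin N) ℂ), Z = {s | ∀ p ∈ I, eval s p = 0}

/-- A Zariski-locally-closed subset of `ℂ^N`: the difference of two Zariski-closed
sets (equivalently, the intersection of a Zariski-closed and a Zariski-open set). -/
def ZarLocallyClosed {N : ℕ} (S : Set (Fin N → ℂ)) : Prop :=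
  ∃ Z W : Set (Fin N → ℂ), ZarClosedAff Z ∧ ZarClosedAff W ∧ S = Z \ W

/-- Zariski irreducibility of a subset of `ℂ^N`. -/
def ZarIrreducible {N : ℕ} (S : Set (Fin N → ℂ)) : Prop :=
  S.Nonempty ∧ ∀ Z₁ Z₂ : Set (Fin N → ℂ), ZarClosedAff Z₁ → ZarClosedAff Z₂ →
    S ⊆ Z₁ ∪ Z₂ → (S ⊆ Z₁ ∨ S ⊆ Z₂)

/-- `S` is, near `s`, a complex submanifold of `ℂ^N` of complex dimension `m`:
there are an open set `U ∋ s` and a holomorphic homeomorphism-onto-its-image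
`φ` with injective differential from an open subset of `ℂ^m` onto `S ∩ U`. -/
def SmoothChartAt {N : ℕ} (S : Set (Fin N → ℂ)) (m : ℕ) (s : Fin N → ℂ) : Prop :=
  ∃ U : Set (Fin N → ℂ), IsOpen U ∧ s ∈ U ∧
    ∃ (V : Set (Fin m → ℂ)) (φ : (Fin m → ℂ) → Fin N → ℂ),
      IsOpen V ∧ AnalyticOnNhd ℂ φ V ∧ Set.InjOn φ V ∧ φ '' V = S ∩ U ∧
      (∀ v ∈ V, Function.Injective (fderiv ℂ φ v)) ∧
      ∃ ψ : (Fin N → ℂ) → Fin m → ℂ, ContinuousOn ψ (S ∩ U) ∧ ∀ v ∈ V, ψ (φ v) = v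

/-- `S` is a smooth complex submanifold of `ℂ^N` of pure complex dimension `m`. -/
def SmoothOfDim {N : ℕ} (S : Set (Fin N → ℂ)) (m : ℕ) : Prop :=
  ∀ s ∈ S, SmoothChartAt S m s

/-- The member of an algebraic family of rational maps of degree `d` over a base inside
`ℂ^N` at the parameter `s`: the coefficient tuples of the two degree-`d` forms are given
by the polynomials `A j`, `B j` evaluated at `s`. -/
def famMap {N d : ℕ} (A B : Fin (d + 1) → MvPolynomial (Fin N) ℂ) (s : Fin N → ℂ) :
    P1 → P1 :=
  ratFun (fun j => eval s (A j)) (fun j => eval s (B j))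

/-- The preperiodic points of the member at parameter `s` of an algebraic family of
rational maps. -/
def famPreper {N d : ℕ} (A B : Fin (d + 1) → MvPolynomial (Fin N) ℂ) (s : Fin N → ℂ) :
    Set P1 :=
  {x | ∃ n m : ℕ, m < n ∧ (famMap A B s)^[n] x = (famMap A B s)^[m] x}

/-- Evaluation of the variables indexed by `Fin N ⊕ (Fin ℓ × Fin 2)` at a point of
`ℂ^N × (ℙ¹(ℂ))^ℓ`: affine coordinates on the first factor, homogeneous coordinates
(of the chosen representatives) on each `ℙ¹` factor. -/
def ambEval {N ℓ : ℕ} (p : (Fin N → ℂ) × (Fin ℓ → P1)) :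
    Sum (Fin N) (Fin ℓ × Fin 2) → ℂ :=
  Sum.elim p.1 fun q => (p.2 q.1).rep q.2

/-- A polynomial in the affine coordinates of `ℂ^N` and the `ℓ` pairs of homogeneous
coordinates which is homogeneous in each pair of homogeneous coordinates. -/
def MultiHomog {N ℓ : ℕ} (Φ : MvPolynomial (Sum (Fin N) (Fin ℓ × Fin 2)) ℂ) : Prop :=
  ∀ i : Fin ℓ, ∃ h : ℕ, ∀ mo ∈ Φ.support,
    mo (Sum.inr (i, 0)) + mo (Sum.inr (i, 1)) = h

/-- A Zariski-closed subset of `ℂ^N × (ℙ¹(ℂ))^ℓ`: the common zero locus of finitely many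
functions polynomial in the affine coordinates of `ℂ^N` and homogeneous in each of the
`ℓ` pairs of homogeneous coordinates of `ℙ¹`. -/
def ZarClosedProd {N ℓ : ℕ} (Z : Set ((Fin N → ℂ) × (Fin ℓ → P1))) : Prop :=
  ∃ I : Finset (MvPolynomial (Sum (Fin N) (Fin ℓ × Fin 2)) ℂ),
    (∀ Φ ∈ I, MultiHomog Φ) ∧ Z = {p | ∀ Φ ∈ I, eval (ambEval p) Φ = 0}

/-- `T` is Zariski dense in `S × (ℙ¹(ℂ))^ℓ`: the only Zariski-closed subset of the
ambient space containing `T` contains all of `S × (ℙ¹(ℂ))^ℓ`. -/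
def ZarDenseIn {N ℓ : ℕ} (S : Set (Fin N → ℂ))
    (T : Set ((Fin N → ℂ) × (Fin ℓ → P1))) : Prop :=
  ∀ Z : Set ((Fin N → ℂ) × (Fin ℓ → P1)), ZarClosedProd Z → T ⊆ Z →
    ∀ p : (Fin N → ℂ) × (Fin ℓ → P1), p.1 ∈ S → p ∈ Z

/-- `S` is a smooth complex submanifold of `ℂ^N` (of some dimension at each point). -/
def IsSmoothSet {N : ℕ} (S : Set (Fin N → ℂ)) : Prop :=
  ∀ s ∈ S, ∃ m : ℕ, SmoothChartAt S m s


section Aux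

open Finset

/-- A binary form of degree `h` vanishing at representatives of `h + 2` distinct
points of `ℙ¹` vanishes identically. -/
lemma binary_zero (h : ℕ) (c : ℕ → ℂ) (t : Fin (h + 2) → P1) (ht : Function.Injective t)
    (hvan : ∀ k, ∑ j ∈ Finset.range (h + 1),
      c j * (t k).rep 0 ^ j * (t k).rep 1 ^ (h - j) = 0) :
    ∀ v : Fin 2 → ℂ, ∑ j ∈ Finset.range (h + 1), c j * v 0 ^ j * v 1 ^ (h - j) = 0 := by
  classical
  set q : Polynomial ℂ := ∑ j ∈ Finset.range (h + 1), Polynomial.C (c j) * Polynomial.X ^ j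
    with hq
  have hdeg : q.natDegree ≤ h := by
    apply Polynomial.natDegree_sum_le_of_forall_le
    intro j hj
    exact le_trans (Polynomial.natDegree_C_mul_X_pow_le _ _)
      (Nat.lt_succ_iff.mp (Finset.mem_range.mp hj))
  have hcoeff : ∀ j ∈ Finset.range (h + 1), q.coeff j = c j := by
    intro j hj
    rw [hq, Polynomial.finset_sum_coeff]
    have : ∀ i ∈ Finset.range (h + 1),
        (Polynomial.C (c i) * Polynomial.X ^ i).coeff j = if j = i then c i else 0 := by
      intro i _
      rw [Polynomial.coeff_C_mul, Polynomial.coeff_X_pow]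
      split <;> simp
    rw [Finset.sum_congr rfl this, Finset.sum_ite_eq, if_pos hj]
  have keval : ∀ v : Fin 2 → ℂ, v 1 ≠ 0 →
      ∑ j ∈ Finset.range (h + 1), c j * v 0 ^ j * v 1 ^ (h - j)
        = v 1 ^ h * q.eval (v 0 / v 1) := by
    intro v hv1
    rw [hq, Polynomial.eval_finset_sum, Finset.mul_sum]
    refine Finset.sum_congr rfl fun j hj => ?_
    have hjh : j ≤ h := Nat.lt_succ_iff.mp (Finset.mem_range.mp hj)
    have : v 1 ^ (h - j) = v 1 ^ h / v 1 ^ j := (pow_sub₀ _ hv1 hjh)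
    rw [this]
    simp only [Polynomial.eval_mul, Polynomial.eval_C, Polynomial.eval_pow, Polynomial.eval_X,
      div_pow]
    field_simp
  -- at most one point has second coordinate of the representative zero
  have huniq : ∀ k k' : Fin (h + 2), (t k).rep 1 = 0 → (t k').rep 1 = 0 → k = k' := by
    intro k k' hk hk'
    apply ht
    have h0 : (t k).rep 0 ≠ 0 := by
      intro h0
      apply (t k).rep_nonzero
      funext b; fin_cases b <;> simp [h0, hk]
    have h0' : (t k').rep 0 ≠ 0 := by
      intro h0
      apply (t k').rep_nonzero
      funext b; fin_cases b <;> simp [h0, hk']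
    have e0 : (t k).rep 0 / (t k').rep 0 * (t k').rep 0 = (t k).rep 0 :=
      div_mul_cancel₀ _ h0'
    have e1 : (t k).rep 0 / (t k').rep 0 * (t k').rep 1 = (t k).rep 1 := by
      rw [hk, hk', mul_zero]
    have : Projectivization.mk ℂ (t k).rep (t k).rep_nonzero
        = Projectivization.mk ℂ (t k').rep (t k').rep_nonzero := by
      rw [Projectivization.mk_eq_mk_iff']
      refine ⟨(t k).rep 0 / (t k').rep 0, ?_⟩
      funext b
      simp only [Pi.smul_apply, smul_eq_mul]
      fin_cases b
      · exact e0
      · exact e1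
    rwa [Projectivization.mk_rep, Projectivization.mk_rep] at this
  -- the good indices
  have hqz : q = 0 := by
    have hbadcard : Fintype.card {k : Fin (h + 2) // (t k).rep 1 = 0} ≤ 1 := by
      rw [Fintype.card_le_one_iff]
      rintro ⟨k, hk⟩ ⟨k', hk'⟩
      exact Subtype.ext (huniq k k' hk hk')
    have hgoodcard : h + 1 ≤ Fintype.card {k : Fin (h + 2) // ¬ (t k).rep 1 = 0} := by
      have := Fintype.card_subtype_compl (fun k : Fin (h + 2) => (t k).rep 1 = 0)
      rw [this, Fintype.card_fin]
      omega
    have hfinj : Function.Injective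
        (fun k : {k : Fin (h + 2) // ¬ (t k).rep 1 = 0} =>
          (t k.1).rep 0 / (t k.1).rep 1) := by
      rintro ⟨k, hk⟩ ⟨k', hk'⟩ hr
      simp only at hr
      field_simp at hr
      have e0 : (t k).rep 1 / (t k').rep 1 * (t k').rep 0 = (t k).rep 0 := by
        rw [div_mul_eq_mul_div, div_eq_iff hk']
        linear_combination -hr
      have e1 : (t k).rep 1 / (t k').rep 1 * (t k').rep 1 = (t k).rep 1 :=
        div_mul_cancel₀ _ hk'
      have : Projectivization.mk ℂ (t k).rep (t k).rep_nonzero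
          = Projectivization.mk ℂ (t k').rep (t k').rep_nonzero := by
        rw [Projectivization.mk_eq_mk_iff']
        refine ⟨(t k).rep 1 / (t k').rep 1, ?_⟩
        funext b
        simp only [Pi.smul_apply, smul_eq_mul]
        fin_cases b
        · exact e0
        · exact e1
      rw [Projectivization.mk_rep, Projectivization.mk_rep] at this
      exact Subtype.ext (ht this)
    apply Polynomial.eq_zero_of_natDegree_lt_card_of_eval_eq_zero q hfinj
    · rintro ⟨k, hk⟩
      have h0 := hvan k
      rw [keval _ hk] at h0
      rcases mul_eq_zero.mp h0 with h1 | h1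
      · exact absurd (pow_eq_zero_iff'.mp h1).1 hk
      · exact h1
    · omega
  intro v
  have hc0 : ∀ j ∈ Finset.range (h + 1), c j = 0 := by
    intro j hj
    rw [← hcoeff j hj, hqz, Polynomial.coeff_zero]
  exact Finset.sum_eq_zero fun j hj => by rw [hc0 j hj, zero_mul, zero_mul]

/-- If a multihomogeneous polynomial vanishes on all tuples drawn from enough points
of `ℙ¹` over a fixed parameter, it vanishes on the whole fiber. -/
lemma fiber_vanish {N m : ℕ} (Φ : MvPolynomial (Sum (Fin N) (Fin m × Fin 2)) ℂ)
    (h : Fin m → ℕ)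
    (hh : ∀ i : Fin m, ∀ mo ∈ Φ.support,
      mo (Sum.inr (i, 0)) + mo (Sum.inr (i, 1)) = h i)
    (s₀ : Fin N → ℂ) {K : ℕ} (hK : ∀ i, h i + 2 ≤ K)
    (t : Fin K → P1) (ht : Function.Injective t)
    (hvan : ∀ x : Fin m → P1, (∀ i, ∃ k, x i = t k) → eval (ambEval (s₀, x)) Φ = 0) :
    ∀ x : Fin m → P1, eval (ambEval (s₀, x)) Φ = 0 := by
  classical
  suffices H : ∀ k : ℕ, ∀ x : Fin m → P1,
      (∀ i : Fin m, k ≤ (i : ℕ) → ∃ k', x i = t k') → eval (ambEval (s₀, x)) Φ = 0 by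
    intro x
    exact H m x (fun i hi => absurd hi (Nat.not_le.mpr i.isLt))
  intro k
  induction k with
  | zero => exact fun x hx => hvan x (fun i => hx i (Nat.zero_le _))
  | succ k ih =>
    intro x hx
    by_cases hkm : k < m
    · set i₀ : Fin m := ⟨k, hkm⟩ with hi₀
      set f : (Fin 2 → ℂ) → Sum (Fin N) (Fin m × Fin 2) → ℂ :=
        fun v => Sum.elim s₀ (fun q => if q.1 = i₀ then v q.2 else (x q.1).rep q.2) with hfd
      set c : ℕ → ℂ := fun j =>
        ∑ mo ∈ Φ.support.filter (fun mo => mo (Sum.inr (i₀, 0)) = j),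
          Φ.coeff mo * ((∏ a : Fin N, s₀ a ^ mo (Sum.inl a)) *
            ∏ i ∈ Finset.univ.erase i₀,
              ((x i).rep 0 ^ mo (Sum.inr (i, 0)) * (x i).rep 1 ^ mo (Sum.inr (i, 1)))) with hcd
      have keyid : ∀ v : Fin 2 → ℂ,
          eval (f v) Φ
            = ∑ j ∈ Finset.range (h i₀ + 1), c j * v 0 ^ j * v 1 ^ (h i₀ - j) := by
        intro v
        rw [eval_eq']
        have hmaps : ∀ mo ∈ Φ.support, mo (Sum.inr (i₀, 0)) ∈ Finset.range (h i₀ + 1) := by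
          intro mo hmo
          rw [Finset.mem_range, Nat.lt_succ_iff]
          exact le_trans (Nat.le_add_right _ _) (le_of_eq (hh i₀ mo hmo))
        rw [← Finset.sum_fiberwise_of_maps_to hmaps
          (fun mo => Φ.coeff mo * ∏ z, f v z ^ mo z)]
        refine Finset.sum_congr rfl fun j hj => ?_
        rw [hcd]
        rw [Finset.sum_mul, Finset.sum_mul]
        refine Finset.sum_congr rfl fun mo hmo => ?_
        obtain ⟨hmoS, hmoj⟩ := Finset.mem_filter.mp hmo
        have hprod : ∏ z, f v z ^ mo z
            = ((∏ a : Fin N, s₀ a ^ mo (Sum.inl a)) *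
                ∏ i ∈ Finset.univ.erase i₀,
                  ((x i).rep 0 ^ mo (Sum.inr (i, 0)) * (x i).rep 1 ^ mo (Sum.inr (i, 1))))
              * (v 0 ^ j * v 1 ^ (h i₀ - j)) := by
          rw [Fintype.prod_sum_type]
          have h2 : ∏ q : Fin m × Fin 2, f v (Sum.inr q) ^ mo (Sum.inr q)
              = ∏ i : Fin m, ∏ b : Fin 2, f v (Sum.inr (i, b)) ^ mo (Sum.inr (i, b)) :=
            Fintype.prod_prod_type _
          rw [h2, ← Finset.mul_prod_erase Finset.univ _ (Finset.mem_univ i₀)]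
          have h3 : ∏ b : Fin 2, f v (Sum.inr (i₀, b)) ^ mo (Sum.inr (i₀, b))
              = v 0 ^ j * v 1 ^ (h i₀ - j) := by
            rw [Fin.prod_univ_two]
            simp only [hfd, Sum.elim_inr, eq_self_iff_true, if_true]
            have h7 := hh i₀ mo hmoS
            rw [hmoj] at h7
            have h6 : mo (Sum.inr (i₀, 1)) = h i₀ - j := by omega
            rw [hmoj, h6]
          have h4 : ∀ i ∈ Finset.univ.erase i₀,
              ∏ b : Fin 2, f v (Sum.inr (i, b)) ^ mo (Sum.inr (i, b))
                = (x i).rep 0 ^ mo (Sum.inr (i, 0)) * (x i).rep 1 ^ mo (Sum.inr (i, 1)) := by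
            intro i hi
            have hne : i ≠ i₀ := (Finset.mem_erase.mp hi).1
            rw [Fin.prod_univ_two]
            simp only [hfd, Sum.elim_inr, if_neg hne]
          rw [h3, Finset.prod_congr rfl h4]
          have h5 : ∀ a : Fin N, f v (Sum.inl a) ^ mo (Sum.inl a) = s₀ a ^ mo (Sum.inl a) := by
            intro a; rw [hfd]; rfl
          rw [Finset.prod_congr rfl (fun a _ => h5 a)]
          ring
        rw [hprod]
        ring
      -- vanishing at the sample points
      have hbin : ∀ v : Fin 2 → ℂ,
          ∑ j ∈ Finset.range (h i₀ + 1), c j * v 0 ^ j * v 1 ^ (h i₀ - j) = 0 := by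
        apply binary_zero (h i₀) c (t ∘ Fin.castLE (hK i₀))
        · exact ht.comp (Fin.castLE_injective _)
        · intro k'
          have hx' : ∀ i : Fin m, k ≤ (i : ℕ) →
              ∃ k'', Function.update x i₀ (t (Fin.castLE (hK i₀) k')) i = t k'' := by
            intro i hi
            by_cases hii : i = i₀
            · subst hii
              exact ⟨Fin.castLE (hK i₀) k', by rw [Function.update_self]⟩
            · refine (Function.update_of_ne hii _ _) ▸ hx i ?_
              have : (i : ℕ) ≠ k := fun hc => hii (Fin.ext hc)
              omega
          have h0 := ih (Function.update x i₀ (t (Fin.castLE (hK i₀) k'))) hx'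
          have hamb : ambEval (s₀, Function.update x i₀ (t (Fin.castLE (hK i₀) k')))
              = f ((t (Fin.castLE (hK i₀) k')).rep) := by
            funext z
            cases z with
            | inl a => rfl
            | inr q =>
              show (Function.update x i₀ (t (Fin.castLE (hK i₀) k')) q.1).rep q.2 = _
              simp only [hfd, Sum.elim_inr]
              by_cases hq : q.1 = i₀
              · rw [hq, Function.update_self, if_pos rfl]
              · rw [Function.update_of_ne hq, if_neg hq]
          rw [hamb, keyid] at h0
          exact h0
      have hamb2 : ambEval (s₀, x) = f ((x i₀).rep) := by
        funext z
        cases z with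
        | inl a => rfl
        | inr q =>
          show (x q.1).rep q.2 = _
          simp only [hfd, Sum.elim_inr]
          by_cases hq : q.1 = i₀
          · rw [hq, if_pos rfl]
          · rw [if_neg hq]
      rw [hamb2, keyid]
      exact hbin _
    · refine ih x fun i hi => absurd hi ?_
      have : (i : ℕ) < m := i.isLt
      omega

/-- From a subset of `A` of cardinality `K` extract an injective tuple in `A`. -/
lemma inj_of_ncard {α : Type*} {A tt : Set α} {K : ℕ} (hsub : tt ⊆ A) (hfin : tt.Finite)
    (hcard : tt.ncard = K) : ∃ f : Fin K → α, Function.Injective f ∧ ∀ k, f k ∈ A := by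
  have : Finite tt := hfin.to_subtype
  have hnc : Nat.card tt = K := by rw [Nat.card_coe_set_eq, hcard]
  let e : tt ≃ Fin K := Finite.equivFinOfCardEq hnc
  refine ⟨fun k => (e.symm k : α), ?_, fun k => hsub (e.symm k).2⟩
  intro k k' hkk
  have := Subtype.coe_injective hkk
  exact e.symm.injective this

end Aux

/-- If along a generic sequence of parameters `s n ∈ S` the number of common preperiodic
points of `f_{s n}` and `g_{s n}` is infinite for each `n` or tends to infinity, then for
every `m ≥ 1` the tuples of common preperiodic points are Zariski dense in
`S × (ℙ¹(ℂ))^m`. -/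
theorem statement6 {N d : ℕ} (hd : 2 ≤ d)
    (S : Set (Fin N → ℂ))
    (hlc : ZarLocallyClosed S) (hirr : ZarIrreducible S) (hsm : IsSmoothSet S)
    (fa fb ga gb : Fin (d + 1) → MvPolynomial (Fin N) ℂ)
    (hf : ∀ s ∈ S, GoodPair (fun j => eval s (fa j)) (fun j => eval s (fb j)))
    (hg : ∀ s ∈ S, GoodPair (fun j => eval s (ga j)) (fun j => eval s (gb j)))
    (s : ℕ → Fin N → ℂ) (hs : ∀ n, s n ∈ S)
    (hgen : ∀ Z : Set (Fin N → ℂ), ZarClosedAff Z → ¬ S ⊆ Z → {n | s n ∈ Z}.Finite)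
    (hcard :
      (∀ n, (famPreper fa fb (s n) ∩ famPreper ga gb (s n)).Infinite) ∨
      Filter.Tendsto (fun n => (famPreper fa fb (s n) ∩ famPreper ga gb (s n)).ncard)
        Filter.atTop Filter.atTop) :
    ∀ m : ℕ, 1 ≤ m →
      ZarDenseIn S {p : (Fin N → ℂ) × (Fin m → P1) | p.1 ∈ S ∧
        ∀ i : Fin m, p.2 i ∈ famPreper fa fb p.1 ∩ famPreper ga gb p.1} := by
  classical
  intro m hm Z hZ hTZ p hp
  obtain ⟨I, hIhom, rfl⟩ := hZ
  simp only [Set.mem_setOf_eq]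
  intro Φ hΦ
  choose h hh using hIhom Φ hΦ
  set K : ℕ := Finset.univ.sup h + 2 with hKdef
  have hK : ∀ i, h i + 2 ≤ K := fun i =>
    Nat.add_le_add_right (Finset.le_sup (Finset.mem_univ i)) 2
  -- infinitely many parameters with K distinct common preperiodic points
  have hinf : ∀ j : ℕ, ∃ n, j ≤ n ∧ ∃ t : Fin K → P1, Function.Injective t ∧
      ∀ k, t k ∈ famPreper fa fb (s n) ∩ famPreper ga gb (s n) := by
    intro j
    rcases hcard with hc | hc
    · obtain ⟨tt, hsub, hfin, hcard'⟩ := (hc j).exists_subset_ncard_eq K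
      obtain ⟨t, htinj, htmem⟩ := inj_of_ncard hsub hfin hcard'
      exact ⟨j, le_refl j, t, htinj, htmem⟩
    · obtain ⟨n, hn1, hn2⟩ :=
        ((hc.eventually_ge_atTop K).and (Filter.eventually_ge_atTop j)).exists
      obtain ⟨tt, hsub, hcard'⟩ := Set.exists_subset_card_eq hn1
      have hfin : tt.Finite := Set.finite_of_ncard_ne_zero (by omega)
      obtain ⟨t, htinj, htmem⟩ := inj_of_ncard hsub hfin hcard'
      exact ⟨n, hn2, t, htinj, htmem⟩
  -- the polynomial in the parameter obtained by substituting the coordinates of p.2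
  set P : MvPolynomial (Fin N) ℂ :=
    eval₂ C (Sum.elim X fun q => C ((p.2 q.1).rep q.2)) Φ with hPdef
  have heval : ∀ s₀ : Fin N → ℂ, eval s₀ P = eval (ambEval (s₀, p.2)) Φ := by
    intro s₀
    rw [hPdef, eval_eval₂]
    have h1 : (eval s₀).comp (C : ℂ →+* MvPolynomial (Fin N) ℂ) = RingHom.id ℂ := by
      ext a; simp
    rw [h1, eval₂_id]
    have h2 : (fun z => eval s₀ (Sum.elim X (fun q => C ((p.2 q.1).rep q.2)) z))
        = ambEval (s₀, p.2) := by
      funext z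
      cases z with
      | inl a => simp [ambEval]
      | inr q => simp [ambEval]
    exact DFunLike.congr_fun (congrArg eval h2) Φ
  have Zcl : ZarClosedAff {s₀ : Fin N → ℂ | eval s₀ P = 0} := by
    refine ⟨{P}, ?_⟩
    ext s₀; simp
  have hSsub : S ⊆ {s₀ : Fin N → ℂ | eval s₀ P = 0} := by
    by_contra hns
    have hfin := hgen _ Zcl hns
    obtain ⟨j, hj⟩ := hfin.bddAbove
    obtain ⟨n, hnj, t, htinj, htmem⟩ := hinf (j + 1)
    have hmem : n ∈ {n | s n ∈ {s₀ : Fin N → ℂ | eval s₀ P = 0}} := by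
      show eval (s n) P = 0
      rw [heval]
      refine fiber_vanish Φ h hh (s n) hK t htinj ?_ p.2
      intro x hx
      have hT : ((s n, x) : (Fin N → ℂ) × (Fin m → P1)) ∈
          {p : (Fin N → ℂ) × (Fin m → P1) | p.1 ∈ S ∧
            ∀ i : Fin m, p.2 i ∈ famPreper fa fb p.1 ∩ famPreper ga gb p.1} := by
        refine ⟨hs n, fun i => ?_⟩
        obtain ⟨k, hk⟩ := hx i
        show x i ∈ _
        rw [hk]
        exact htmem k
      exact hTZ hT Φ hΦ
    have := hj hmem
    omega
  have := hSsub hp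
  rw [Set.mem_setOf_eq, heval] at this
  have hpp : ambEval (p.1, p.2) = ambEval p := by rw [Prod.mk.eta]
  rwa [hpp] at this
end
end

section
/- Fix an integer d ≥ 2 and let ζ ∈ ℂ be a primitive (d+1)-th root of unity. The following 4d + 2 polynomials in ℂ[z] span a subspace of ℂ[z] of dimension exactly 4d − 1: the polynomials −(d/ζ)·z^{d²−d+k} − ζ^k·z^{dk} for k = 0, 1, …, d; the polynomials ζ^ℓ·z^{d²+ℓd} + d·z^{d²+ℓ} for ℓ = 1, …, d; the polynomials d·z^{d²−d+i} + z^{id} for i = 0, 1, …, d; and the polynomials −z^{d²+jd} − d·z^{d²+j} for j = 1, …, d. -/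
noncomputable section
open Polynomial Finset Submodule

namespace Statement7Aux

/-- The set of all exponents appearing, written as a disjoint union. -/
def expSet (d : ℕ) : Finset ℕ :=
  ((Finset.range (d - 1)).image (fun k => d * k)) ∪ Finset.Icc (d ^ 2 - d) (d ^ 2) ∪
    Finset.Icc (d ^ 2 + 1) (d ^ 2 + d) ∪ ((Finset.Icc 2 d).image (fun l => d ^ 2 + l * d))

variable {d : ℕ}

lemma sq_facts (hd : 2 ≤ d) : 2 * d ≤ d ^ 2 := by nlinarith

lemma mem_dk (hd : 2 ≤ d) {k : ℕ} (hk : k ≤ d) : d * k ∈ expSet d := by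
  have h2 := sq_facts hd
  rcases lt_or_ge k (d - 1) with h | h
  · exact Finset.mem_union_left _ (Finset.mem_union_left _ (Finset.mem_union_left _
      (Finset.mem_image_of_mem _ (Finset.mem_range.mpr h))))
  · refine Finset.mem_union_left _ (Finset.mem_union_left _ (Finset.mem_union_right _ ?_))
    have hk1 : k = d - 1 ∨ k = d := by omega
    have hdd : d * d = d ^ 2 := by ring
    rcases hk1 with rfl | rfl
    · have h3 : d * (d - 1) + d = d ^ 2 := by
        cases d with
        | zero => simp
        | succ n => simp only [Nat.succ_sub_one, pow_two]; ring
      have h4 : d * (d - 1) = d ^ 2 - d := by omega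
      rw [h4, Finset.mem_Icc]; omega
    · rw [hdd, Finset.mem_Icc]; omega

lemma mem_low (hd : 2 ≤ d) {k : ℕ} (hk : k ≤ d) : d ^ 2 - d + k ∈ expSet d := by
  have h2 := sq_facts hd
  refine Finset.mem_union_left _ (Finset.mem_union_left _ (Finset.mem_union_right _ ?_))
  simp [Finset.mem_Icc]; omega

lemma mem_mid (hd : 2 ≤ d) {l : ℕ} (h1 : 1 ≤ l) (h2 : l ≤ d) : d ^ 2 + l ∈ expSet d := by
  refine Finset.mem_union_left _ (Finset.mem_union_right _ ?_)
  simp [Finset.mem_Icc]; omega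

lemma mem_high (hd : 2 ≤ d) {l : ℕ} (h1 : 1 ≤ l) (h2 : l ≤ d) : d ^ 2 + l * d ∈ expSet d := by
  rcases eq_or_lt_of_le h1 with h | h
  · refine Finset.mem_union_left _ (Finset.mem_union_right _ ?_)
    simp [Finset.mem_Icc, ← h]; omega
  · exact Finset.mem_union_right _ (Finset.mem_image_of_mem _ (Finset.mem_Icc.mpr ⟨h, h2⟩))

lemma card_expSet (hd : 2 ≤ d) : (expSet d).card = 4 * d - 1 := by
  have h2 := sq_facts hd
  have hd0 : 0 < d := by omega
  have hmulk : ∀ k, k < d - 1 → d * k + 2 * d ≤ d ^ 2 := by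
    intro k hk
    have : d * (k + 2) ≤ d * d := Nat.mul_le_mul_left d (by omega)
    nlinarith
  have hmull : ∀ l, 2 ≤ l → l ≤ d → d ^ 2 + 2 * d ≤ d ^ 2 + l * d := by
    intro l hl _; have : 2 * d ≤ l * d := Nat.mul_le_mul_right d hl; omega
  rw [expSet]
  rw [Finset.card_union_of_disjoint, Finset.card_union_of_disjoint,
    Finset.card_union_of_disjoint]
  · rw [Finset.card_image_of_injective _ (mul_right_injective₀ hd0.ne'),
      Finset.card_image_of_injOn, Nat.card_Icc, Nat.card_Icc, Finset.card_range,
      Nat.card_Icc]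
    · omega
    · intro a _ b _ hab
      simp only at hab
      exact Nat.eq_of_mul_eq_mul_right hd0 (by omega)
  · -- range-image disjoint from Icc (d^2-d) d^2
    rw [Finset.disjoint_left]
    rintro x hx hx'
    simp only [Finset.mem_image, Finset.mem_range] at hx
    obtain ⟨k, hk, rfl⟩ := hx
    have := hmulk k hk
    simp [Finset.mem_Icc] at hx'; omega
  · rw [Finset.disjoint_left]
    rintro x hx hx'
    simp only [Finset.mem_union, Finset.mem_image, Finset.mem_range, Finset.mem_Icc] at hx
    simp [Finset.mem_Icc] at hx'
    rcases hx with ⟨k, hk, rfl⟩ | hx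
    · have := hmulk k hk; omega
    · omega
  · rw [Finset.disjoint_left]
    rintro x hx hx'
    simp only [Finset.mem_union, Finset.mem_image, Finset.mem_range, Finset.mem_Icc] at hx
    simp only [Finset.mem_image, Finset.mem_Icc] at hx'
    obtain ⟨l, ⟨hl2, hld⟩, rfl⟩ := hx'
    have := hmull l hl2 hld
    rcases hx with (⟨k, hk, he⟩ | hx) | hx
    · have := hmulk k hk; omega
    · omega
    · omega

end Statement7Aux

namespace Statement7Aux

def genSet (d : ℕ) (ζ : ℂ) : Set ℂ[X] :=
  (Set.range fun k : Fin (d + 1) =>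
      monomial (d ^ 2 - d + (k : ℕ)) (-((d : ℂ) / ζ)) +
        monomial (d * (k : ℕ)) (-(ζ ^ (k : ℕ)))) ∪
   (Set.range fun l : Fin d =>
      monomial (d ^ 2 + ((l : ℕ) + 1) * d) (ζ ^ ((l : ℕ) + 1)) +
        monomial (d ^ 2 + ((l : ℕ) + 1)) (d : ℂ)) ∪
   (Set.range fun i : Fin (d + 1) =>
      monomial (d ^ 2 - d + (i : ℕ)) (d : ℂ) +
        monomial ((i : ℕ) * d) (1 : ℂ)) ∪
   (Set.range fun j : Fin d =>
      monomial (d ^ 2 + ((j : ℕ) + 1) * d) (-1 : ℂ) +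
        monomial (d ^ 2 + ((j : ℕ) + 1)) (-(d : ℂ)))

variable {d : ℕ} {ζ : ℂ}

lemma memA (hd : 2 ≤ d) {k : ℕ} (hk : k ≤ d) :
    monomial (d ^ 2 - d + k) (-((d : ℂ) / ζ)) + monomial (d * k) (-(ζ ^ k)) ∈ genSet d ζ :=
  Or.inl (Or.inl (Or.inl ⟨⟨k, by omega⟩, rfl⟩))

lemma memB (hd : 2 ≤ d) {l : ℕ} (h1 : 1 ≤ l) (h2 : l ≤ d) :
    monomial (d ^ 2 + l * d) (ζ ^ l) + monomial (d ^ 2 + l) (d : ℂ) ∈ genSet d ζ := by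
  refine Or.inl (Or.inl (Or.inr ⟨⟨l - 1, by omega⟩, ?_⟩))
  have h : l - 1 + 1 = l := by omega
  simp only [h]

lemma memC (hd : 2 ≤ d) {k : ℕ} (hk : k ≤ d) :
    monomial (d ^ 2 - d + k) (d : ℂ) + monomial (k * d) (1 : ℂ) ∈ genSet d ζ :=
  Or.inl (Or.inr ⟨⟨k, by omega⟩, rfl⟩)

lemma memD (hd : 2 ≤ d) {l : ℕ} (h1 : 1 ≤ l) (h2 : l ≤ d) :
    monomial (d ^ 2 + l * d) (-1 : ℂ) + monomial (d ^ 2 + l) (-(d : ℂ)) ∈ genSet d ζ := by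
  refine Or.inr ⟨⟨l - 1, by omega⟩, ?_⟩
  have h : l - 1 + 1 = l := by omega
  simp only [h]

section spanMem

variable (hd : 2 ≤ d) (hζ : IsPrimitiveRoot ζ (d + 1))
include hd hζ

lemma hpow {m : ℕ} (h1 : 1 ≤ m) (h2 : m ≤ d) : ζ ^ m ≠ 1 := by
  intro h
  have := Nat.le_of_dvd (by omega) ((hζ.pow_eq_one_iff_dvd m).mp h)
  omega

lemma L1 {k : ℕ} (hk : k < d) : monomial (d * k) (1 : ℂ) ∈ span ℂ (genSet d ζ) := by
  have hz0 : ζ ≠ 0 := hζ.ne_zero (by omega)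
  have key : ζ • (monomial (d ^ 2 - d + k) (-((d : ℂ) / ζ)) + monomial (d * k) (-(ζ ^ k)))
      + (monomial (d ^ 2 - d + k) (d : ℂ) + monomial (k * d) (1 : ℂ))
      = monomial (d * k) (1 - ζ ^ (k + 1)) := by
    simp only [smul_add, smul_monomial, smul_eq_mul]
    rw [mul_comm k d, add_add_add_comm, ← map_add, ← map_add]
    have hx : ζ * -((d : ℂ) / ζ) + (d : ℂ) = 0 := by
      field_simp
      ring
    rw [hx, map_zero, zero_add]
    congr 1
    ring
  have hne : (1 : ℂ) - ζ ^ (k + 1) ≠ 0 :=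
    sub_ne_zero_of_ne (hpow hd hζ (by omega) (by omega)).symm
  have heq : monomial (d * k) (1 : ℂ) = (1 - ζ ^ (k + 1))⁻¹ •
      (ζ • (monomial (d ^ 2 - d + k) (-((d : ℂ) / ζ)) + monomial (d * k) (-(ζ ^ k)))
      + (monomial (d ^ 2 - d + k) (d : ℂ) + monomial (k * d) (1 : ℂ))) := by
    rw [key, smul_monomial, smul_eq_mul, inv_mul_cancel₀ hne]
  rw [heq]
  exact smul_mem _ _ (add_mem (smul_mem _ _ (subset_span (memA hd (by omega))))
    (subset_span (memC hd (by omega))))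

lemma L2 : monomial (d ^ 2) (1 : ℂ) ∈ span ℂ (genSet d ζ) := by
  have h2 := sq_facts hd
  have he1 : d ^ 2 - d + d = d ^ 2 := by omega
  have he2 : d * d = d ^ 2 := by ring
  have key : monomial (d ^ 2 - d + d) (d : ℂ) + monomial (d * d) (1 : ℂ)
      = monomial (d ^ 2) ((d : ℂ) + 1) := by
    rw [he1, he2, ← map_add]
  have hne : (d : ℂ) + 1 ≠ 0 := by
    have : ((d + 1 : ℕ) : ℂ) ≠ 0 := Nat.cast_ne_zero.mpr (Nat.succ_ne_zero d)
    push_cast at this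
    exact this
  have heq : monomial (d ^ 2) (1 : ℂ) = ((d : ℂ) + 1)⁻¹ •
      (monomial (d ^ 2 - d + d) (d : ℂ) + monomial (d * d) (1 : ℂ)) := by
    rw [key, smul_monomial, smul_eq_mul, inv_mul_cancel₀ hne]
  rw [heq]
  exact smul_mem _ _ (subset_span (memC hd (le_refl d)))

lemma L3 {k : ℕ} (hk : k ≤ d) : monomial (d ^ 2 - d + k) (1 : ℂ) ∈ span ℂ (genSet d ζ) := by
  have h2 := sq_facts hd
  rcases eq_or_lt_of_le hk with heq | hlt
  · have he1 : d ^ 2 - d + k = d ^ 2 := by omega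
    rw [he1]; exact L2 hd hζ
  · have hdc : (d : ℂ) ≠ 0 := Nat.cast_ne_zero.mpr (by omega)
    have key : (monomial (d ^ 2 - d + k) (d : ℂ) + monomial (k * d) (1 : ℂ))
        + (-1 : ℂ) • monomial (k * d) (1 : ℂ) = monomial (d ^ 2 - d + k) (d : ℂ) := by
      rw [smul_monomial, smul_eq_mul, mul_one, add_assoc, ← map_add]
      norm_num
    have heq : monomial (d ^ 2 - d + k) (1 : ℂ) = (d : ℂ)⁻¹ •
        ((monomial (d ^ 2 - d + k) (d : ℂ) + monomial (k * d) (1 : ℂ))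
        + (-1 : ℂ) • monomial (k * d) (1 : ℂ)) := by
      rw [key, smul_monomial, smul_eq_mul, inv_mul_cancel₀ hdc]
    rw [heq]
    have hkd : monomial (k * d) (1 : ℂ) ∈ span ℂ (genSet d ζ) := by
      have := L1 hd hζ hlt
      rwa [mul_comm] at this
    exact smul_mem _ _ (add_mem (subset_span (memC hd hk)) (smul_mem _ _ hkd))

lemma L4 {l : ℕ} (h1 : 1 ≤ l) (h2 : l ≤ d) :
    monomial (d ^ 2 + l) (1 : ℂ) ∈ span ℂ (genSet d ζ) := by
  have hdc : (d : ℂ) ≠ 0 := Nat.cast_ne_zero.mpr (by omega)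
  have key : (monomial (d ^ 2 + l * d) (ζ ^ l) + monomial (d ^ 2 + l) (d : ℂ))
      + ζ ^ l • (monomial (d ^ 2 + l * d) (-1 : ℂ) + monomial (d ^ 2 + l) (-(d : ℂ)))
      = monomial (d ^ 2 + l) ((d : ℂ) * (1 - ζ ^ l)) := by
    simp only [smul_add, smul_monomial, smul_eq_mul]
    rw [add_add_add_comm, ← map_add, ← map_add]
    have hx : ζ ^ l + ζ ^ l * (-1 : ℂ) = 0 := by ring
    rw [hx, map_zero, zero_add]
    congr 1
    ring
  have hne : (d : ℂ) * (1 - ζ ^ l) ≠ 0 :=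
    mul_ne_zero hdc (sub_ne_zero_of_ne (hpow hd hζ h1 h2).symm)
  have heq : monomial (d ^ 2 + l) (1 : ℂ) = ((d : ℂ) * (1 - ζ ^ l))⁻¹ •
      ((monomial (d ^ 2 + l * d) (ζ ^ l) + monomial (d ^ 2 + l) (d : ℂ))
      + ζ ^ l • (monomial (d ^ 2 + l * d) (-1 : ℂ) + monomial (d ^ 2 + l) (-(d : ℂ)))) := by
    rw [key, smul_monomial, smul_eq_mul, inv_mul_cancel₀ hne]
  rw [heq]
  exact smul_mem _ _ (add_mem (subset_span (memB hd h1 h2))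
    (smul_mem _ _ (subset_span (memD hd h1 h2))))

lemma L5 {l : ℕ} (h1 : 1 ≤ l) (h2 : l ≤ d) :
    monomial (d ^ 2 + l * d) (1 : ℂ) ∈ span ℂ (genSet d ζ) := by
  have key : (-1 : ℂ) • (monomial (d ^ 2 + l * d) (-1 : ℂ) + monomial (d ^ 2 + l) (-(d : ℂ)))
      + (-(d : ℂ)) • monomial (d ^ 2 + l) (1 : ℂ) = monomial (d ^ 2 + l * d) (1 : ℂ) := by
    simp only [smul_add, smul_monomial, smul_eq_mul]
    rw [add_assoc, ← map_add]
    have hx : (-1 : ℂ) * -(d : ℂ) + -(d : ℂ) * 1 = 0 := by ring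
    rw [hx, map_zero, add_zero]
    congr 1
    ring
  rw [← key]
  exact add_mem (smul_mem _ _ (subset_span (memD hd h1 h2)))
    (smul_mem _ _ (L4 hd hζ h1 h2))

lemma span_eq : span ℂ (genSet d ζ) =
    span ℂ ((fun e => monomial e (1 : ℂ)) '' (expSet d : Set ℕ)) := by
  have h2 := sq_facts hd
  apply le_antisymm
  · rw [span_le]
    have hmem : ∀ e ∈ expSet d, ∀ c : ℂ,
        monomial e c ∈ span ℂ ((fun e => monomial e (1 : ℂ)) '' (expSet d : Set ℕ)) := by
      intro e he c
      have : monomial e c = c • monomial e (1 : ℂ) := by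
        rw [smul_monomial, smul_eq_mul, mul_one]
      rw [this]
      exact smul_mem _ _ (subset_span ⟨e, he, rfl⟩)
    rintro p (((⟨k, rfl⟩ | ⟨l, rfl⟩) | ⟨i, rfl⟩) | ⟨j, rfl⟩)
    · exact add_mem (hmem _ (mem_low hd k.is_le) _) (hmem _ (mem_dk hd k.is_le) _)
    · exact add_mem (hmem _ (mem_high hd (by omega) (by have := l.isLt; omega)) _)
        (hmem _ (mem_mid hd (by omega) (by have := l.isLt; omega)) _)
    · refine add_mem (hmem _ (mem_low hd i.is_le) _) (hmem _ ?_ _)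
      have := mem_dk (d := d) hd i.is_le
      rwa [mul_comm] at this
    · exact add_mem (hmem _ (mem_high hd (by omega) (by have := j.isLt; omega)) _)
        (hmem _ (mem_mid hd (by omega) (by have := j.isLt; omega)) _)
  · rw [span_le]
    rintro p ⟨e, he, rfl⟩
    simp only [expSet, Finset.coe_union, Set.mem_union, Finset.mem_coe, Finset.mem_image,
      Finset.mem_Icc, Finset.mem_range, Finset.coe_image, Set.mem_image, Finset.coe_Icc,
      Set.mem_Icc, Finset.coe_range, Set.mem_Iio] at he
    rcases he with ((⟨k, hk, rfl⟩ | he) | he) | ⟨l, ⟨hl2, hld⟩, rfl⟩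
    · exact L1 hd hζ (by omega)
    · obtain ⟨k, hk, rfl⟩ : ∃ k, k ≤ d ∧ e = d ^ 2 - d + k :=
        ⟨e - (d ^ 2 - d), by omega, by omega⟩
      exact L3 hd hζ hk
    · obtain ⟨l, h1, h2', rfl⟩ : ∃ l, 1 ≤ l ∧ l ≤ d ∧ e = d ^ 2 + l :=
        ⟨e - d ^ 2, by omega, by omega, by omega⟩
      exact L4 hd hζ h1 h2'
    · exact L5 hd hζ (by omega) hld

end spanMem

end Statement7Aux

namespace Statement7Aux

theorem statement7_aux (d : ℕ) (hd : 2 ≤ d) (ζ : ℂ) (hζ : IsPrimitiveRoot ζ (d + 1)) :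
    Module.finrank ℂ (Submodule.span ℂ
      ((Set.range fun k : Fin (d + 1) =>
          monomial (d ^ 2 - d + (k : ℕ)) (-((d : ℂ) / ζ)) +
            monomial (d * (k : ℕ)) (-(ζ ^ (k : ℕ)))) ∪
       (Set.range fun l : Fin d =>
          monomial (d ^ 2 + ((l : ℕ) + 1) * d) (ζ ^ ((l : ℕ) + 1)) +
            monomial (d ^ 2 + ((l : ℕ) + 1)) (d : ℂ)) ∪
       (Set.range fun i : Fin (d + 1) =>
          monomial (d ^ 2 - d + (i : ℕ)) (d : ℂ) +
            monomial ((i : ℕ) * d) (1 : ℂ)) ∪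
       (Set.range fun j : Fin d =>
          monomial (d ^ 2 + ((j : ℕ) + 1) * d) (-1 : ℂ) +
            monomial (d ^ 2 + ((j : ℕ) + 1)) (-(d : ℂ))))) = 4 * d - 1 := by
  show Module.finrank ℂ (span ℂ (genSet d ζ)) = 4 * d - 1
  rw [span_eq hd hζ, Set.image_eq_range]
  have hli : LinearIndependent ℂ (fun e : (expSet d : Finset ℕ) => monomial (e : ℕ) (1 : ℂ)) := by
    have := (Polynomial.basisMonomials ℂ).linearIndependent.comp
      (fun e : (expSet d : Finset ℕ) => (e : ℕ)) Subtype.val_injective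
    simpa [Function.comp_def, Polynomial.coe_basisMonomials] using this
  have h := finrank_span_eq_card hli
  rw [Fintype.card_coe, card_expSet hd] at h
  exact h

end Statement7Aux

/-- For `d ≥ 2` and `ζ` a primitive `(d+1)`-th root of unity, the `4d + 2` polynomials
`-(d/ζ)·z^(d²-d+k) - ζ^k·z^(dk)` (`0 ≤ k ≤ d`), `ζ^ℓ·z^(d²+ℓd) + d·z^(d²+ℓ)`
(`1 ≤ ℓ ≤ d`), `d·z^(d²-d+i) + z^(id)` (`0 ≤ i ≤ d`), and `-z^(d²+jd) - d·z^(d²+j)`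
(`1 ≤ j ≤ d`) span a subspace of `ℂ[z]` of dimension exactly `4d - 1`. -/
theorem statement7 (d : ℕ) (hd : 2 ≤ d) (ζ : ℂ) (hζ : IsPrimitiveRoot ζ (d + 1)) :
    Module.finrank ℂ (Submodule.span ℂ
      ((Set.range fun k : Fin (d + 1) =>
          monomial (d ^ 2 - d + (k : ℕ)) (-((d : ℂ) / ζ)) +
            monomial (d * (k : ℕ)) (-(ζ ^ (k : ℕ)))) ∪
       (Set.range fun l : Fin d =>
          monomial (d ^ 2 + ((l : ℕ) + 1) * d) (ζ ^ ((l : ℕ) + 1)) +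
            monomial (d ^ 2 + ((l : ℕ) + 1)) (d : ℂ)) ∪
       (Set.range fun i : Fin (d + 1) =>
          monomial (d ^ 2 - d + (i : ℕ)) (d : ℂ) +
            monomial ((i : ℕ) * d) (1 : ℂ)) ∪
       (Set.range fun j : Fin d =>
          monomial (d ^ 2 + ((j : ℕ) + 1) * d) (-1 : ℂ) +
            monomial (d ^ 2 + ((j : ℕ) + 1)) (-(d : ℂ))))) = 4 * d - 1 :=
  Statement7Aux.statement7_aux d hd ζ hζ
end
end

section
/- Let d ≥ 2 and 1 ≤ m ≤ d be integers, let ζ ∈ ℂ satisfy ζ^m = 1, and let c ∈ ℂ. Define the polynomial maps f, g : ℂ → ℂ by f(z) = z^{d−m}(z^m + c) and g(z) = ζ·f(z). Then f and g have the same set of preperiodic points in ℂ: {z ∈ ℂ : ∃ n > k ≥ 0, f^[n](z) = f^[k](z)} = {z ∈ ℂ : ∃ n > k ≥ 0, g^[n](z) = g^[k](z)}. -/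
/-!
Write `f w = w ^ e * (w ^ m + c)` and `g = ζ * f` with `ζ ^ m = 1`. For an `m`-th root of unity `u`
one has `f (u * w) = u ^ e * f w`, so by induction `g^[n] z = u_n * f^[n] z` with `u_n` an `m`-th
root of unity. As there are only finitely many of those, the orbit of `z` under `g` is finite
exactly when its orbit under `f` is, and a point is preperiodic exactly when its orbit is finite.
-/

open Set

namespace Function

variable {α : Type*}

theorem exists_iterate_eq_iterate_of_lt {f : α → α} {x : α} {n k : ℕ} (hkn : k < n)
    (h : f^[n] x = f^[k] x) (t : ℕ) : ∃ s < n, f^[t] x = f^[s] x := by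
  induction t using Nat.strong_induction_on with
  | _ t ih =>
    rcases lt_or_ge t n with htn | hnt
    · exact ⟨t, htn, rfl⟩
    · obtain ⟨s, hs, hts⟩ := ih (t - (n - k)) (by omega)
      refine ⟨s, hs, ?_⟩
      calc f^[t] x = f^[t - n] (f^[n] x) := by rw [← iterate_add_apply, Nat.sub_add_cancel hnt]
        _ = f^[t - (n - k)] x := by rw [h, ← iterate_add_apply]; congr 1; omega
        _ = f^[s] x := hts

theorem exists_lt_iterate_eq_iff_finite_range {f : α → α} {x : α} :
    (∃ n k : ℕ, k < n ∧ f^[n] x = f^[k] x) ↔ (range fun n => f^[n] x).Finite := by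
  constructor
  · rintro ⟨n, k, hkn, h⟩
    refine ((finite_Iio n).image fun s => f^[s] x).subset ?_
    rintro _ ⟨t, rfl⟩
    obtain ⟨s, hs, hts⟩ := exists_iterate_eq_iterate_of_lt hkn h t
    exact ⟨s, hs, hts.symm⟩
  · intro hfin
    obtain ⟨k, n, hkn, h⟩ :=
      hfin.exists_lt_map_eq_of_forall_mem (f := fun n => f^[n] x) fun n => mem_range_self n
    exact ⟨n, k, hkn, h.symm⟩

theorem finite_range_iterate_of_forall_exists_smul {M : Type*} [SMul M α] {S : Set M}
    (hS : S.Finite) {f g : α → α} {x : α} (h : ∀ n, ∃ u ∈ S, g^[n] x = u • f^[n] x)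
    (hf : (range fun n => f^[n] x).Finite) : (range fun n => g^[n] x).Finite := by
  refine (hS.smul hf).subset ?_
  rintro _ ⟨n, rfl⟩
  obtain ⟨u, hu, hn⟩ := h n
  simpa only [hn] using smul_mem_smul hu (mem_range_self n)

end Function

section RootsOfUnity

variable {R : Type*} [CommRing R] {m : ℕ}

theorem mul_pow_mul_pow_add_of_pow_eq_one {u : R} (hu : u ^ m = 1) (e : ℕ) (c w : R) :
    (u * w) ^ e * ((u * w) ^ m + c) = u ^ e * (w ^ e * (w ^ m + c)) := by
  rw [mul_pow u w m, hu, one_mul]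
  ring

theorem exists_pow_eq_one_iterate_eq_mul {ζ : R} (hζ : ζ ^ m = 1) (e : ℕ) (c z : R) (n : ℕ) :
    ∃ u : R, u ^ m = 1 ∧ (fun w : R => ζ * (w ^ e * (w ^ m + c)))^[n] z =
      u * (fun w : R => w ^ e * (w ^ m + c))^[n] z := by
  induction n with
  | zero => exact ⟨1, one_pow m, (one_mul z).symm⟩
  | succ n ih =>
    obtain ⟨u, hu, hn⟩ := ih
    refine ⟨ζ * u ^ e, by rw [mul_pow, ← pow_mul, mul_comm e, pow_mul, hu, one_pow, hζ, one_mul], ?_⟩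
    simp only [Function.iterate_succ_apply', hn, mul_pow_mul_pow_add_of_pow_eq_one hu, mul_assoc]

theorem exists_pow_eq_one_and_eq_mul_of_eq_mul (hm : 0 < m) {u x y : R} (hu : u ^ m = 1)
    (h : y = u * x) : ∃ v : R, v ^ m = 1 ∧ x = v * y := by
  refine ⟨u ^ (m - 1), by rw [← pow_mul, mul_comm, pow_mul, hu, one_pow], ?_⟩
  rw [h, ← mul_assoc, ← pow_succ, Nat.sub_add_cancel hm, hu, one_mul]

end RootsOfUnity

theorem statement12_general (d m : ℕ) (hm1 : 1 ≤ m)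
    (ζ : ℂ) (hζ : ζ ^ m = 1) (c : ℂ) :
    {z : ℂ | ∃ n k : ℕ, k < n ∧
        (fun w : ℂ => w ^ (d - m) * (w ^ m + c))^[n] z =
          (fun w : ℂ => w ^ (d - m) * (w ^ m + c))^[k] z} =
    {z : ℂ | ∃ n k : ℕ, k < n ∧
        (fun w : ℂ => ζ * (w ^ (d - m) * (w ^ m + c)))^[n] z =
          (fun w : ℂ => ζ * (w ^ (d - m) * (w ^ m + c)))^[k] z} := by
  ext z
  simp only [mem_ofPred_eq, Function.exists_lt_iterate_eq_iff_finite_range]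
  have hS : (Polynomial.nthRootsFinset m (1 : ℂ) : Set ℂ).Finite := Finset.finite_toSet _
  have hmem {u : ℂ} : u ∈ (Polynomial.nthRootsFinset m (1 : ℂ) : Set ℂ) ↔ u ^ m = 1 :=
    Polynomial.mem_nthRootsFinset hm1 1
  constructor
  · refine Function.finite_range_iterate_of_forall_exists_smul hS fun n => ?_
    obtain ⟨u, hu, hn⟩ := exists_pow_eq_one_iterate_eq_mul hζ (d - m) c z n
    exact ⟨u, hmem.2 hu, hn⟩
  · refine Function.finite_range_iterate_of_forall_exists_smul hS fun n => ?_
    obtain ⟨u, hu, hn⟩ := exists_pow_eq_one_iterate_eq_mul hζ (d - m) c z n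
    obtain ⟨v, hv, hn'⟩ := exists_pow_eq_one_and_eq_mul_of_eq_mul hm1 hu hn
    exact ⟨v, hmem.2 hv, hn'⟩

/-- For `d ≥ 2`, `1 ≤ m ≤ d`, `ζ^m = 1` and `c ∈ ℂ`, the maps `f(z) = z^(d-m)(z^m + c)`
and `g(z) = ζ·f(z)` have the same set of preperiodic points in `ℂ`. -/
theorem statement12 (d m : ℕ) (hd : 2 ≤ d) (hm1 : 1 ≤ m) (hmd : m ≤ d)
    (ζ : ℂ) (hζ : ζ ^ m = 1) (c : ℂ) :
    {z : ℂ | ∃ n k : ℕ, k < n ∧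
        (fun w : ℂ => w ^ (d - m) * (w ^ m + c))^[n] z =
          (fun w : ℂ => w ^ (d - m) * (w ^ m + c))^[k] z} =
    {z : ℂ | ∃ n k : ℕ, k < n ∧
        (fun w : ℂ => ζ * (w ^ (d - m) * (w ^ m + c)))^[n] z =
          (fun w : ℂ => ζ * (w ^ (d - m) * (w ^ m + c)))^[k] z} :=
  statement12_general d m hm1 ζ hζ c
end

section
/- Let d ≥ 2 be an integer and let s ∈ ℂ be a root of unity. Then the maps f(z) = z^d and g(z) = s^{d−1}·z^d on ℂ have the same set of preperiodic points: {z ∈ ℂ : ∃ n > k ≥ 0, f^[n](z) = f^[k](z)} = {z ∈ ℂ : ∃ n > k ≥ 0, g^[n](z) = g^[k](z)}. -/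
/-!
Multiplication by `s` conjugates `g(z) = s^(d-1) z^d` to `f(z) = z^d`, since
`s · g(z) = (s z)^d`; so `z` is preperiodic for `g` iff `s z` is preperiodic for `f`.
The preperiodic points of `f` are `0` and the roots of unity (the orbit `z^(d^n)` of a root of
unity stays in the finite set of its powers), and this set is stable under multiplication by the
root of unity `s` and by its inverse.
-/

namespace Function

def preperiodicPts {α : Type*} (h : α → α) : Set α :=
  {z | ∃ n k : ℕ, k < n ∧ h^[n] z = h^[k] z}

theorem mem_preperiodicPts_of_forall_iterate_mem {α : Type*} {h : α → α} {z : α} {S : Set α}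
    (hS : S.Finite) (horbit : ∀ n, h^[n] z ∈ S) : z ∈ preperiodicPts h := by
  obtain ⟨k, n, hkn, heq⟩ := hS.exists_lt_map_eq_of_forall_mem (f := fun n ↦ h^[n] z) horbit
  exact ⟨n, k, hkn, heq.symm⟩

theorem Semiconj.preperiodicPts_eq_preimage {α β : Type*} {φ : α → β} {g : α → α}
    {f : β → β} (hφ : Semiconj φ g f) (hinj : φ.Injective) :
    preperiodicPts g = φ ⁻¹' preperiodicPts f := by
  ext z
  simp only [preperiodicPts, Set.mem_ofPred_eq, Set.mem_preimage,
    ← (hφ.iterate_right _).eq, hinj.eq_iff]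

end Function

open Function

theorem semiconj_mul_pow {M : Type*} [CommMonoid M] (s : M) {d : ℕ} (hd : d ≠ 0) :
    Semiconj (s * ·) (fun w ↦ s ^ (d - 1) * w ^ d) (· ^ d) := by
  intro w
  dsimp only
  rw [mul_pow, ← mul_assoc, ← pow_succ', Nat.sub_add_cancel (Nat.one_le_iff_ne_zero.mpr hd)]

theorem preperiodicPts_pow {M : Type*} [CommMonoidWithZero M] [IsCancelMulZero M] {d : ℕ}
    (hd : 2 ≤ d) : preperiodicPts (fun z : M ↦ z ^ d) = {z | z = 0 ∨ IsOfFinOrder z} := by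
  ext z
  constructor
  · rintro ⟨n, k, hkn, heq⟩
    simp only [pow_iterate] at heq
    rcases eq_or_ne z 0 with rfl | hz
    · exact Or.inl rfl
    have hlt : d ^ k < d ^ n := Nat.pow_lt_pow_right hd hkn
    refine Or.inr (isOfFinOrder_iff_pow_eq_one.mpr ⟨d ^ n - d ^ k, by omega, ?_⟩)
    refine mul_left_cancel₀ (pow_ne_zero (d ^ k) hz) ?_
    rw [← pow_add, Nat.add_sub_cancel' hlt.le, heq, mul_one]
  · rintro (rfl | hz)
    · exact ⟨1, 0, one_pos, zero_pow (by positivity)⟩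
    · refine mem_preperiodicPts_of_forall_iterate_mem hz.finite_powers fun n ↦ ?_
      rw [pow_iterate]
      exact ⟨d ^ n, rfl⟩

theorem IsOfFinOrder.ne_zero {M₀ : Type*} [MonoidWithZero M₀] [Nontrivial M₀] {s : M₀}
    (hs : IsOfFinOrder s) : s ≠ 0 := by
  rintro rfl
  obtain ⟨n, hn, h⟩ := isOfFinOrder_iff_pow_eq_one.mp hs
  exact zero_ne_one ((zero_pow hn.ne').symm.trans h)

theorem IsOfFinOrder.inv₀ {G₀ : Type*} [GroupWithZero G₀] {s : G₀} (hs : IsOfFinOrder s) :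
    IsOfFinOrder s⁻¹ := by
  obtain ⟨n, hn, hsn⟩ := isOfFinOrder_iff_pow_eq_one.mp hs
  exact isOfFinOrder_iff_pow_eq_one.mpr ⟨n, hn, by rw [inv_pow, hsn, inv_one]⟩

theorem IsOfFinOrder.mul_eq_zero_or_isOfFinOrder_iff {G₀ : Type*} [CommGroupWithZero G₀]
    {s : G₀} (hs : IsOfFinOrder s) (z : G₀) :
    s * z = 0 ∨ IsOfFinOrder (s * z) ↔ z = 0 ∨ IsOfFinOrder z := by
  have hs0 : s ≠ 0 := hs.ne_zero
  refine or_congr (mul_eq_zero_iff_left hs0) ⟨fun h ↦ ?_, hs.mul⟩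
  simpa [inv_mul_cancel_left₀ hs0] using hs.inv₀.mul h

/-- For `d ≥ 2` and `s` a root of unity, the maps `f(z) = z^d` and
`g(z) = s^(d-1)·z^d` have the same set of preperiodic points in `ℂ`. -/
theorem statement14 (d : ℕ) (hd : 2 ≤ d) (s : ℂ) (hs : ∃ n : ℕ, 1 ≤ n ∧ s ^ n = 1) :
    {z : ℂ | ∃ n k : ℕ, k < n ∧
        (fun w : ℂ => w ^ d)^[n] z = (fun w : ℂ => w ^ d)^[k] z} =
    {z : ℂ | ∃ n k : ℕ, k < n ∧
        (fun w : ℂ => s ^ (d - 1) * w ^ d)^[n] z =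
          (fun w : ℂ => s ^ (d - 1) * w ^ d)^[k] z} := by
  obtain ⟨m, hm, hsm⟩ := hs
  have hs : IsOfFinOrder s := isOfFinOrder_iff_pow_eq_one.mpr ⟨m, hm, hsm⟩
  have hconj := semiconj_mul_pow s (d := d) (by omega)
  change preperiodicPts _ = preperiodicPts _
  ext z
  rw [hconj.preperiodicPts_eq_preimage (mul_right_injective₀ hs.ne_zero), Set.mem_preimage,
    preperiodicPts_pow hd, Set.mem_ofPred_eq, Set.mem_ofPred_eq,
    hs.mul_eq_zero_or_isOfFinOrder_iff]
end

section
/- Let d, e ≥ 2 be integers, let ε₁, ε₂ ∈ {1, −1}, and let α ∈ ℂ ∖ {0}. Let f be the rational map on ℙ¹(ℂ) given in the affine coordinate by f(z) = z^{ε₁ d} (that is, z^d or z^{−d}), and let g be given by g(z) = α·z^{ε₂ e}. If α is a root of unity, then Preper(f) = Preper(g); if α is not a root of unity, then Preper(f) ∩ Preper(g) = {0, ∞} (the two points [0:1] and [1:0] of ℙ¹(ℂ)). -/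
noncomputable section

open MvPolynomial

/-!
On `ℂˣ` both maps have the form `z ↦ β z^s` with `|s| ≥ 2` (`β = 1` for `f`, `β = α` for `g`),
`toP1` conjugates this map to the rational map on `ℙ¹ ∖ {0, ∞}`, and `{0, ∞}` is invariant.
The `n`-th iterate is `z ↦ β^(1 + s + ⋯ + s^(n-1)) z^(s^n)`, so `fⁿ z = fᵐ z` with `n > m` gives
`z^K = β^L` with `K = s^n - s^m ≠ 0` and `L ≠ 0`: a preperiodic `z` is a root of unity iff `β` is.
Conversely, if `z` and `β` are both roots of unity, the orbit stays in the finite set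
`⟨β⟩ * ⟨z⟩`. Hence the preperiodic points of `f` in `ℂˣ` are the roots of unity; those of `g`
are the roots of unity when `α` is one, and include no root of unity otherwise.
-/

namespace Function

variable {α β : Type*} {f : α → α} {x : α}

def IsPreperiodicPt (f : α → α) (x : α) : Prop :=
  ∃ n m : ℕ, m < n ∧ f^[n] x = f^[m] x

theorem isPreperiodicPt_of_forall_iterate_mem {s : Set α} (hs : s.Finite) (h : ∀ n, f^[n] x ∈ s) :
    IsPreperiodicPt f x := by
  obtain ⟨m, n, hmn, heq⟩ := hs.exists_lt_map_eq_of_forall_mem h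
  exact ⟨n, m, hmn, heq.symm⟩

theorem isPreperiodicPt_of_mapsTo {s : Set α} (hs : s.Finite) (hf : Set.MapsTo f s s) (hx : x ∈ s) :
    IsPreperiodicPt f x :=
  isPreperiodicPt_of_forall_iterate_mem hs fun n => hf.iterate n hx

theorem Semiconj.isPreperiodicPt_iff {ι : β → α} {φ : β → β} (hι : Injective ι)
    (h : Semiconj ι φ f) (u : β) : IsPreperiodicPt f (ι u) ↔ IsPreperiodicPt φ u := by
  simp only [IsPreperiodicPt, ← (h.iterate_right _).eq, hι.eq_iff]

end Function

open Function Finset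

section MulZPow

variable {G : Type*} [CommGroup G] {β z : G} {s : ℤ}

theorem isOfFinOrder_zpow_iff {x : G} {k : ℤ} (hk : k ≠ 0) :
    IsOfFinOrder (x ^ k) ↔ IsOfFinOrder x := by
  refine ⟨fun h => ?_, fun h => h.zpow⟩
  obtain ⟨n, hn, hxn⟩ := isOfFinOrder_iff_zpow_eq_one.mp h
  exact isOfFinOrder_iff_zpow_eq_one.mpr ⟨k * n, mul_ne_zero hk hn, by rwa [zpow_mul]⟩

theorem iterate_mul_zpow (β : G) (s : ℤ) (z : G) (n : ℕ) :
    (fun w => β * w ^ s)^[n] z = β ^ (∑ i ∈ range n, s ^ i) * z ^ (s ^ n) := by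
  induction n with
  | zero => simp
  | succ n ih =>
    rw [iterate_succ_apply', ih, geom_sum_succ, pow_succ, mul_zpow, ← zpow_mul, ← zpow_mul,
      zpow_add, zpow_one, mul_comm s]
    group

theorem exists_zpow_eq_zpow_of_isPreperiodicPt (hs : 2 ≤ s.natAbs)
    (h : IsPreperiodicPt (fun w => β * w ^ s) z) : ∃ K L : ℤ, K ≠ 0 ∧ L ≠ 0 ∧ z ^ K = β ^ L := by
  obtain ⟨n, m, hmn, heq⟩ := h
  simp only [iterate_mul_zpow] at heq
  have hpow : s ^ n ≠ s ^ m := (Int.pow_right_injective hs).ne hmn.ne'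
  refine ⟨s ^ n - s ^ m, (∑ i ∈ range m, s ^ i) - ∑ i ∈ range n, s ^ i, sub_ne_zero.mpr hpow,
    ?_, ?_⟩
  · rw [sub_ne_zero]
    intro hsum
    apply hpow
    have := congrArg (· * (s - 1)) hsum
    simp only [geom_sum_mul] at this
    omega
  · rw [zpow_sub, zpow_sub, mul_inv_eq_iff_eq_mul, mul_right_comm, eq_mul_inv_iff_mul_eq]
    exact (mul_comm _ _).trans heq

theorem Function.IsPreperiodicPt.isOfFinOrder_iff (hs : 2 ≤ s.natAbs)
    (h : IsPreperiodicPt (fun w => β * w ^ s) z) : IsOfFinOrder z ↔ IsOfFinOrder β := by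
  obtain ⟨K, L, hK, hL, hzβ⟩ := exists_zpow_eq_zpow_of_isPreperiodicPt hs h
  rw [← isOfFinOrder_zpow_iff hK, hzβ, isOfFinOrder_zpow_iff hL]

theorem isPreperiodicPt_of_isOfFinOrder (hβ : IsOfFinOrder β) (hz : IsOfFinOrder z) :
    IsPreperiodicPt (fun w => β * w ^ s) z :=
  isPreperiodicPt_of_forall_iterate_mem (hβ.finite_zpowers.mul hz.finite_zpowers) fun n => by
    rw [iterate_mul_zpow]
    exact Set.mul_mem_mul (Subgroup.zpow_mem_zpowers _ _) (Subgroup.zpow_mem_zpowers _ _)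

theorem isPreperiodicPt_mul_zpow_iff (hs : 2 ≤ s.natAbs) (hβ : IsOfFinOrder β) :
    IsPreperiodicPt (fun w => β * w ^ s) z ↔ IsOfFinOrder z :=
  ⟨fun h => (h.isOfFinOrder_iff hs).mpr hβ, isPreperiodicPt_of_isOfFinOrder hβ⟩

end MulZPow

section ProjectiveLine

open Projectivization

theorem toP1_injective : Injective toP1 := by
  intro z w h
  obtain ⟨c, hc⟩ := (mk_eq_mk_iff ℂ _ _ _ _).mp h
  have h1 : (c : ℂ) = 1 := by simpa [Units.smul_def] using congrFun hc 1
  simpa [Units.smul_def, h1] using (congrFun hc 0).symm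

theorem mk_eq_toP1_div {p q : ℂ} (hq : q ≠ 0) (h : ![p, q] ≠ 0) :
    mk ℂ ![p, q] h = toP1 (p / q) := by
  rw [toP1, mk_eq_mk_iff]
  refine ⟨Units.mk0 q hq, ?_⟩
  ext i
  fin_cases i <;> simp [Units.smul_def, mul_div_cancel₀ _ hq]

theorem mk_eq_infty {p : ℂ} (hp : p ≠ 0) (h : ![p, 0] ≠ 0) : mk ℂ ![p, 0] h = infty := by
  rw [infty, mk_eq_mk_iff]
  refine ⟨Units.mk0 p hp, ?_⟩
  ext i
  fin_cases i <;> simp [Units.smul_def]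

theorem mk_mem_zero_infty_of_mul_eq_zero {p q : ℂ} (hpq : p * q = 0) (h : ![p, q] ≠ 0) :
    mk ℂ ![p, q] h ∈ ({toP1 0, infty} : Set P1) := by
  rcases eq_or_ne q 0 with rfl | hq
  · exact Or.inr (mk_eq_infty (by simpa using h) h)
  · left
    rw [mk_eq_toP1_div hq, (mul_eq_zero_iff_right hq).mp hpq, zero_div]

theorem mem_zero_infty_or_exists_units_eq_toP1 (x : P1) :
    x ∈ ({toP1 0, infty} : Set P1) ∨ ∃ u : ℂˣ, x = toP1 u := by
  induction x using Projectivization.ind with | h v hv =>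
  obtain ⟨p, q, rfl⟩ : ∃ p q : ℂ, v = ![p, q] := ⟨v 0, v 1, by ext i; fin_cases i <;> rfl⟩
  rcases eq_or_ne (p * q) 0 with hpq | hpq
  · exact Or.inl (mk_mem_zero_infty_of_mul_eq_zero hpq hv)
  · obtain ⟨hp, hq⟩ := mul_ne_zero_iff.mp hpq
    exact Or.inr ⟨Units.mk0 (p / q) (div_ne_zero hp hq), mk_eq_toP1_div hq hv⟩

end ProjectiveLine

section RatMap

variable {d : ℕ}

theorem homEval_smul (a : Fin (d + 1) → ℂ) (c : ℂ) (v : Fin 2 → ℂ) :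
    homEval a (c • v) = c ^ d * homEval a v := by
  simp only [homEval, Finset.mul_sum, Pi.smul_apply, smul_eq_mul, mul_pow]
  refine Finset.sum_congr rfl fun j _ => ?_
  rw [← pow_sub_mul_pow c (Nat.lt_succ_iff.mp j.isLt)]
  ring

theorem homEval_single {k : ℕ} (hk : k ≤ d) (c : ℂ) (v : Fin 2 → ℂ) :
    homEval (fun j : Fin (d + 1) => if (j : ℕ) = k then c else 0) v =
      c * v 0 ^ k * v 1 ^ (d - k) := by
  rw [homEval, Fintype.sum_eq_single ⟨k, Nat.lt_succ_of_le hk⟩ fun j hj => by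
    simp [Fin.ext_iff.not.mp hj]]
  simp

theorem RatMap.toFun_mk (F : RatMap d) (v : Fin 2 → ℂ) (hv : v ≠ 0) :
    F.toFun (Projectivization.mk ℂ v hv) =
      Projectivization.mk ℂ ![homEval F.a v, homEval F.b v] (vec_ne (F.good v hv)) := by
  obtain ⟨c, hc⟩ := (Projectivization.mk_eq_mk_iff ℂ _ v _ hv).mp (Projectivization.mk_rep _)
  have hgood := F.good _ (Projectivization.mk ℂ v hv).rep_nonzero
  rw [RatMap.toFun, ratFun, dif_pos hgood, Projectivization.mk_eq_mk_iff]
  refine ⟨c ^ d, ?_⟩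
  ext i
  fin_cases i <;> simp [← hc, Units.smul_def, homEval_smul]

theorem RatMap.mem_preper_iff (F : RatMap d) (x : P1) : x ∈ Preper F ↔ IsPreperiodicPt F.toFun x :=
  Iff.rfl

-- `F` is the map `z ↦ β z^(ε d)`, given by the pair `(β X^d, Y^d)` or `(β Y^d, X^d)`.
def RatMap.IsMonomial (F : RatMap d) (ε : ℤ) (β : ℂ) : Prop :=
  (ε = 1 ∨ ε = -1) ∧
    F.a = (fun j : Fin (d + 1) => if (j : ℕ) = (if ε = 1 then d else 0) then β else 0) ∧
    F.b = (fun j : Fin (d + 1) => if (j : ℕ) = (if ε = 1 then 0 else d) then 1 else 0)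

namespace RatMap.IsMonomial

variable {F : RatMap d} {ε : ℤ} {β : ℂ}

theorem two_le_natAbs_mul (hF : F.IsMonomial ε β) (hd : 2 ≤ d) : 2 ≤ (ε * d).natAbs := by
  rcases hF.1 with rfl | rfl <;> simpa

theorem homEval_cases (hF : F.IsMonomial ε β) (v : Fin 2 → ℂ) :
    (ε = 1 ∧ homEval F.a v = β * v 0 ^ d ∧ homEval F.b v = v 1 ^ d) ∨
      (ε = -1 ∧ homEval F.a v = β * v 1 ^ d ∧ homEval F.b v = v 0 ^ d) := by
  obtain ⟨rfl | rfl, hFa, hFb⟩ := hF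
  · left
    rw [hFa, hFb, if_pos rfl, if_pos rfl, homEval_single le_rfl, homEval_single d.zero_le]
    simp
  · right
    rw [hFa, hFb, if_neg (by decide), if_neg (by decide), homEval_single d.zero_le,
      homEval_single le_rfl]
    simp

theorem toFun_toP1 (hF : F.IsMonomial ε β) {z : ℂ} (hz : z ≠ 0) :
    F.toFun (toP1 z) = toP1 (β * z ^ (ε * d)) := by
  rw [toP1, RatMap.toFun_mk]
  rcases hF.homEval_cases ![z, 1] with ⟨rfl, ha, hb⟩ | ⟨rfl, ha, hb⟩
  · simp only [ha, hb, Matrix.cons_val_zero, Matrix.cons_val_one, one_pow]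
    rw [mk_eq_toP1_div one_ne_zero, div_one, one_mul, zpow_natCast]
  · simp only [ha, hb, Matrix.cons_val_zero, Matrix.cons_val_one, one_pow, mul_one]
    rw [mk_eq_toP1_div (pow_ne_zero d hz), neg_one_mul, zpow_neg, zpow_natCast, div_eq_mul_inv]

theorem mapsTo_zero_infty (hF : F.IsMonomial ε β) (hd : d ≠ 0) :
    Set.MapsTo F.toFun {toP1 0, infty} {toP1 0, infty} := by
  have hmul (v : Fin 2 → ℂ) : homEval F.a v * homEval F.b v = β * (v 0 * v 1) ^ d := by
    rcases hF.homEval_cases v with ⟨-, ha, hb⟩ | ⟨-, ha, hb⟩ <;> rw [ha, hb] <;> ring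
  rintro x (rfl | rfl) <;>
    simpa only [toP1, infty, RatMap.toFun_mk] using
      mk_mem_zero_infty_of_mul_eq_zero (by simp [hmul, hd]) _

theorem semiconj (hF : F.IsMonomial ε β) (hβ : β ≠ 0) :
    Semiconj (fun u : ℂˣ => toP1 u) (fun u => Units.mk0 β hβ * u ^ (ε * d)) F.toFun := fun u => by
  dsimp only
  rw [hF.toFun_toP1 u.ne_zero, Units.val_mul, Units.val_zpow_eq_zpow_val, Units.val_mk0]

theorem toP1_mem_preper_iff (hF : F.IsMonomial ε β) (hd : 2 ≤ d) (hβ : IsOfFinOrder β) (u : ℂˣ) :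
    toP1 u ∈ Preper F ↔ IsOfFinOrder (u : ℂ) := by
  have hβ0 : β ≠ 0 := hβ.isUnit.ne_zero
  rw [RatMap.mem_preper_iff, Units.isOfFinOrder_val, ← isPreperiodicPt_mul_zpow_iff
    (hF.two_le_natAbs_mul hd) ((Units.isOfFinOrder_val (u := Units.mk0 β hβ0)).mp hβ)]
  exact (hF.semiconj hβ0).isPreperiodicPt_iff (toP1_injective.comp Units.val_injective) u

theorem isOfFinOrder_iff_of_toP1_mem_preper (hF : F.IsMonomial ε β) (hd : 2 ≤ d) (hβ : β ≠ 0)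
    {u : ℂˣ} (hu : toP1 u ∈ Preper F) : IsOfFinOrder (u : ℂ) ↔ IsOfFinOrder β := by
  have hpre :=
    ((hF.semiconj hβ).isPreperiodicPt_iff (toP1_injective.comp Units.val_injective) u).mp hu
  rw [Units.isOfFinOrder_val, hpre.isOfFinOrder_iff (hF.two_le_natAbs_mul hd),
    ← Units.isOfFinOrder_val, Units.val_mk0]

theorem zero_infty_subset_preper (hF : F.IsMonomial ε β) (hd : d ≠ 0) :
    {toP1 0, infty} ⊆ Preper F := fun _ hx =>
  isPreperiodicPt_of_mapsTo (Set.toFinite _) (hF.mapsTo_zero_infty hd) hx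

end RatMap.IsMonomial

end RatMap

/-- Let `f(z) = z^(ε₁·d)` and `g(z) = α·z^(ε₂·e)` with `d, e ≥ 2`, signs
`ε₁, ε₂ ∈ {1, -1}`, and `α ≠ 0`, realized as the degree-`d` and degree-`e` rational maps
`F`, `G` on `ℙ¹(ℂ)` induced by the homogeneous pairs `(X^d, Y^d)` (resp. `(Y^d, X^d)`)
and `(α X^e, Y^e)` (resp. `(α Y^e, X^e)`). If `α` is a root of unity then
`Preper F = Preper G`; if `α` is not a root of unity then
`Preper F ∩ Preper G = {0, ∞}`. -/
theorem statement15 (d e : ℕ) (hd : 2 ≤ d) (he : 2 ≤ e) (ε₁ ε₂ : ℤ)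
    (hε₁ : ε₁ = 1 ∨ ε₁ = -1) (hε₂ : ε₂ = 1 ∨ ε₂ = -1) (α : ℂ) (hα : α ≠ 0)
    (F : RatMap d) (G : RatMap e)
    (hFa : F.a = fun j : Fin (d + 1) => if (j : ℕ) = (if ε₁ = 1 then d else 0) then 1 else 0)
    (hFb : F.b = fun j : Fin (d + 1) => if (j : ℕ) = (if ε₁ = 1 then 0 else d) then 1 else 0)
    (hGa : G.a = fun j : Fin (e + 1) => if (j : ℕ) = (if ε₂ = 1 then e else 0) then α else 0)
    (hGb : G.b = fun j : Fin (e + 1) => if (j : ℕ) = (if ε₂ = 1 then 0 else e) then 1 else 0) :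
    ((∃ n : ℕ, 1 ≤ n ∧ α ^ n = 1) → Preper F = Preper G) ∧
    (¬ (∃ n : ℕ, 1 ≤ n ∧ α ^ n = 1) → Preper F ∩ Preper G = {toP1 0, infty}) := by
  have hF : F.IsMonomial ε₁ 1 := ⟨hε₁, hFa, hFb⟩
  have hG : G.IsMonomial ε₂ α := ⟨hε₂, hGa, hGb⟩
  have hF_axes := hF.zero_infty_subset_preper (by omega)
  have hG_axes := hG.zero_infty_subset_preper (by omega)
  have hF_units (u : ℂˣ) := hF.toP1_mem_preper_iff hd IsOfFinOrder.one u
  have hroot : (∃ n : ℕ, 1 ≤ n ∧ α ^ n = 1) ↔ IsOfFinOrder α := isOfFinOrder_iff_pow_eq_one.symm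
  rw [hroot]
  refine ⟨fun hα_fin => ?_, fun hα_inf => ?_⟩
  · ext x
    rcases mem_zero_infty_or_exists_units_eq_toP1 x with hx | ⟨u, rfl⟩
    · exact iff_of_true (hF_axes hx) (hG_axes hx)
    · rw [hF_units, hG.toP1_mem_preper_iff he hα_fin]
  · refine subset_antisymm (fun x ⟨hxF, hxG⟩ => ?_) (Set.subset_inter hF_axes hG_axes)
    rcases mem_zero_infty_or_exists_units_eq_toP1 x with hx | ⟨u, rfl⟩
    · exact hx
    · have hu : IsOfFinOrder (u : ℂ) := (hF_units u).mp hxF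
      exact absurd ((hG.isOfFinOrder_iff_of_toP1_mem_preper he hα hxG).mp hu) hα_inf
end
end

section
/- Let d, e ≥ 2 be integers and ε, δ ∈ {1, −1}. Let D_n denote the degree-n Dickson polynomial of the first kind with parameter 1 over ℂ (characterized by D_n(u + u⁻¹) = u^n + u^{−n} for all u ∈ ℂ ∖ {0}). Then the polynomial maps z ↦ ε·D_d(z) and z ↦ δ·D_e(z) on ℂ have the same set of preperiodic points: {z ∈ ℂ : ∃ n > k ≥ 0, (ε·D_d)^[n](z) = (ε·D_d)^[k](z)} = {z ∈ ℂ : ∃ n > k ≥ 0, (δ·D_e)^[n](z) = (δ·D_e)^[k](z)}. -/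
open Polynomial

/-- If `a + a⁻¹ = b + b⁻¹` with `a, b ≠ 0` then `a = b` or `a * b = 1`. -/
lemma aux_add_inv_eq {a b : ℂ} (ha : a ≠ 0) (hb : b ≠ 0)
    (h : a + a⁻¹ = b + b⁻¹) : a = b ∨ a * b = 1 := by
  have h2 : (a - b) * (a * b - 1) = 0 := by
    have h1 : (a + a⁻¹) * (a * b) = (b + b⁻¹) * (a * b) := by rw [h]
    have ha' : a * a⁻¹ = 1 := mul_inv_cancel₀ ha
    have hb' : b * b⁻¹ = 1 := mul_inv_cancel₀ hb
    ring_nf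
    ring_nf at h1
    linear_combination h1 - b * ha' + a * hb'
  rcases mul_eq_zero.1 h2 with h3 | h3
  · exact Or.inl (sub_eq_zero.1 h3)
  · exact Or.inr (sub_eq_zero.1 h3)

/-- Iterate formula for `z ↦ ε·D_d(z)` on points of the form `u + u⁻¹`. -/
lemma aux_iter (d : ℕ) (ε : ℂ) (hε : ε = 1 ∨ ε = -1) (u : ℂ) (hu : u ≠ 0) (n : ℕ) :
    ∃ s : ℂ, (s = 1 ∨ s = -1) ∧
      (fun w : ℂ => ε * Polynomial.eval w (Polynomial.dickson 1 (1 : ℂ) d))^[n] (u + u⁻¹)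
        = s * u ^ (d ^ n) + (s * u ^ (d ^ n))⁻¹ := by
  induction n with
  | zero => exact ⟨1, Or.inl rfl, by simp⟩
  | succ n ih =>
    obtain ⟨s, hs, h⟩ := ih
    set w := s * u ^ (d ^ n) with hw
    have hs0 : s ≠ 0 := by rcases hs with h' | h' <;> simp [h']
    have hw0 : w ≠ 0 := mul_ne_zero hs0 (pow_ne_zero _ hu)
    refine ⟨ε * s ^ d, ?_, ?_⟩
    · rcases hε with h1 | h1 <;> rcases hs with h2 | h2 <;>
        rcases Nat.even_or_odd d with h3 | h3 <;>
        simp [h1, h2, h3.neg_one_pow, Odd.neg_one_pow]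
    · rw [Function.iterate_succ_apply', h]
      have heval : Polynomial.eval (w + w⁻¹) (Polynomial.dickson 1 (1 : ℂ) d)
          = w ^ d + (w⁻¹) ^ d :=
        Polynomial.dickson_one_one_eval_add_inv w w⁻¹ (mul_inv_cancel₀ hw0) d
      have hεinv : ε⁻¹ = ε := by rcases hε with h1 | h1 <;> norm_num [h1]
      have hinv' : ε * (w⁻¹) ^ d = (ε * w ^ d)⁻¹ := by
        rw [mul_inv ε (w ^ d), hεinv, inv_pow]
      have hkey : ε * w ^ d = ε * s ^ d * u ^ d ^ (n + 1) := by
        rw [hw, mul_pow, ← pow_mul, ← pow_succ, mul_assoc]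
      show ε * Polynomial.eval (w + w⁻¹) (Polynomial.dickson 1 (1 : ℂ) d) = _
      rw [heval, mul_add, hinv', hkey]

/-- Characterization of the preperiodic set: it is the set of `u + u⁻¹` for `u` a root
of unity, independent of `d` and the sign `ε`. -/
lemma aux_char (d : ℕ) (hd : 2 ≤ d) (ε : ℂ) (hε : ε = 1 ∨ ε = -1) :
    {z : ℂ | ∃ n k : ℕ, k < n ∧
        (fun w : ℂ => ε * Polynomial.eval w (Polynomial.dickson 1 (1 : ℂ) d))^[n] z =
          (fun w : ℂ => ε * Polynomial.eval w (Polynomial.dickson 1 (1 : ℂ) d))^[k] z}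
    = {z : ℂ | ∃ u : ℂ, u ≠ 0 ∧ (∃ m : ℕ, 0 < m ∧ u ^ m = 1) ∧ z = u + u⁻¹} := by
  ext z
  obtain ⟨u, hu0, huz⟩ : ∃ u : ℂ, u ≠ 0 ∧ z = u + u⁻¹ := by
    have hroot : ∃ u : ℂ, u ^ 2 - z * u + 1 = 0 := by
      have hdeg : (X ^ 2 - C z * X + 1 : ℂ[X]).degree = 2 := by
        compute_degree!
      obtain ⟨u, hu⟩ := Complex.exists_root (f := X ^ 2 - C z * X + 1) (by rw [hdeg]; norm_num)
      exact ⟨u, by simpa [IsRoot] using hu⟩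
    obtain ⟨u, hu⟩ := hroot
    have hu0 : u ≠ 0 := by rintro rfl; simp at hu
    refine ⟨u, hu0, ?_⟩
    field_simp
    linear_combination -hu
  subst huz
  constructor
  · rintro ⟨n, k, hkn, heq⟩
    obtain ⟨s, hs, hsn⟩ := aux_iter d ε hε u hu0 n
    obtain ⟨t, ht, htk⟩ := aux_iter d ε hε u hu0 k
    rw [hsn, htk] at heq
    have hs0 : s ≠ 0 := by rcases hs with h | h <;> simp [h]
    have ht0 : t ≠ 0 := by rcases ht with h | h <;> simp [h]
    have hs2 : s ^ 2 = 1 := by rcases hs with h | h <;> simp [h]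
    have ht2 : t ^ 2 = 1 := by rcases ht with h | h <;> simp [h]
    have ha : s * u ^ (d ^ n) ≠ 0 := mul_ne_zero hs0 (pow_ne_zero _ hu0)
    have hb : t * u ^ (d ^ k) ≠ 0 := mul_ne_zero ht0 (pow_ne_zero _ hu0)
    have hlt : d ^ k < d ^ n := Nat.pow_lt_pow_right (by omega) hkn
    rcases aux_add_inv_eq ha hb heq with h | h
    · refine ⟨u, hu0, ⟨2 * (d ^ n - d ^ k), by omega, ?_⟩, rfl⟩
      have key : s * u ^ (d ^ n - d ^ k) * u ^ (d ^ k) = t * u ^ (d ^ k) := by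
        rw [mul_assoc, ← pow_add, Nat.sub_add_cancel hlt.le]; exact h
      have key2 : s * u ^ (d ^ n - d ^ k) = t :=
        mul_right_cancel₀ (pow_ne_zero _ hu0) key
      have : s ^ 2 * (u ^ (d ^ n - d ^ k)) ^ 2 = t ^ 2 := by
        rw [← mul_pow, key2]
      rw [hs2, ht2, one_mul] at this
      rw [mul_comm, pow_mul]
      exact this
    · refine ⟨u, hu0, ⟨2 * (d ^ n + d ^ k), by positivity, ?_⟩, rfl⟩
      have key2 : s * t * u ^ (d ^ n + d ^ k) = 1 := by
        rw [pow_add]; linear_combination h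
      have : (s * t) ^ 2 * (u ^ (d ^ n + d ^ k)) ^ 2 = 1 := by
        rw [← mul_pow, key2, one_pow]
      rw [mul_pow, hs2, ht2, one_mul, one_mul] at this
      rw [mul_comm, pow_mul]
      exact this
  · rintro ⟨v, hv0, ⟨m, hm, hvm⟩, hz⟩
    rw [hz]
    set f := fun w : ℂ => ε * Polynomial.eval w (Polynomial.dickson 1 (1 : ℂ) d) with hf
    set F := fun n : ℕ => f^[n] (v + v⁻¹) with hF
    set S : Set ℂ := (fun p : ℂ × ℕ => p.1 * v ^ p.2 + (p.1 * v ^ p.2)⁻¹) ''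
      (({1, -1} : Set ℂ) ×ˢ (Set.Iio m)) with hS
    have hSfin : S.Finite := by
      apply Set.Finite.image
      exact ((Set.finite_singleton (-1 : ℂ)).insert 1).prod (Set.finite_Iio m)
    have hmaps : Set.MapsTo F Set.univ S := by
      intro n _
      obtain ⟨s, hs, hsn⟩ := aux_iter d ε hε v hv0 n
      have hmod : v ^ (d ^ n) = v ^ (d ^ n % m) := pow_eq_pow_mod _ hvm
      refine ⟨(s, d ^ n % m), ⟨by simpa using hs, Nat.mod_lt _ hm⟩, ?_⟩
      simp only [F, f, hsn, hmod]
    obtain ⟨n, -, k, -, hnk, heq⟩ :=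
      Set.infinite_univ.exists_ne_map_eq_of_mapsTo hmaps hSfin
    rcases hnk.lt_or_gt with hlt | hlt
    · exact ⟨k, n, hlt, heq.symm⟩
    · exact ⟨n, k, hlt, heq⟩

/-- For `d, e ≥ 2` and signs `ε, δ ∈ {1, -1}`, the maps `z ↦ ε·D_d(z)` and
`z ↦ δ·D_e(z)`, where `D_n` is the degree-`n` Dickson polynomial of the first kind with
parameter `1` over `ℂ`, have the same set of preperiodic points in `ℂ`. -/
theorem statement16 (d e : ℕ) (hd : 2 ≤ d) (he : 2 ≤ e) (ε δ : ℂ)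
    (hε : ε = 1 ∨ ε = -1) (hδ : δ = 1 ∨ δ = -1) :
    {z : ℂ | ∃ n k : ℕ, k < n ∧
        (fun w : ℂ => ε * Polynomial.eval w (Polynomial.dickson 1 (1 : ℂ) d))^[n] z =
          (fun w : ℂ => ε * Polynomial.eval w (Polynomial.dickson 1 (1 : ℂ) d))^[k] z} =
    {z : ℂ | ∃ n k : ℕ, k < n ∧
        (fun w : ℂ => δ * Polynomial.eval w (Polynomial.dickson 1 (1 : ℂ) e))^[n] z =
          (fun w : ℂ => δ * Polynomial.eval w (Polynomial.dickson 1 (1 : ℂ) e))^[k] z} := by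
  rw [aux_char d hd ε hε, aux_char e he δ hδ]
end
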